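/- arXiv:1308.1628 — 7 statements merged into one kernel-verified Lean document; each statement's English description precedes it below -/
import Mathlib

section
/- For all (x, y) ∈ ℝ², the Euclidean norm of F_{a,b,c}(x, y) equals 1; equivalently, sin²(ax)·φ̃₁(y)² + cos²(ax)·φ̃₁(y)² + sin²(bx)·φ̃₂(y)² + cos²(bx)·φ̃₂(y)² + sin²(cx)·φ̃₃(y)² + cos²(cx)·φ̃₃(y)² = 1, so F_{a,b,c} maps ℝ² into the unit sphere S⁵ ⊂ ℝ⁶. -/
open Real

/-- Rescaled solution `φ̃₁(y) = √((b²+c²−a²)/(2(c²−a²)))·sin y`. -/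
noncomputable def phi1 (a b c y : ℝ) : ℝ :=
  Real.sqrt ((b ^ 2 + c ^ 2 - a ^ 2) / (2 * (c ^ 2 - a ^ 2))) * Real.sin y

/-- Rescaled solution `φ̃₂(y) = √((a²+c²−b²)/(2(c²−b²)))·cos y`. -/
noncomputable def phi2 (a b c y : ℝ) : ℝ :=
  Real.sqrt ((a ^ 2 + c ^ 2 - b ^ 2) / (2 * (c ^ 2 - b ^ 2))) * Real.cos y

/-- Rescaled solution `φ̃₃(y) = √((a²+b²−c²)/(2(b²−c²)))·√(1 − ((b²−a²)/(c²−a²))·sin² y)`. -/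
noncomputable def phi3 (a b c y : ℝ) : ℝ :=
  Real.sqrt ((a ^ 2 + b ^ 2 - c ^ 2) / (2 * (b ^ 2 - c ^ 2))) *
    Real.sqrt (1 - (b ^ 2 - a ^ 2) / (c ^ 2 - a ^ 2) * Real.sin y ^ 2)

/-- The doubly periodic map `F_{a,b,c} : ℝ² → ℝ⁶`, where `ℝ⁶` carries the Euclidean
inner product. -/
noncomputable def Fabc (a b c : ℝ) (p : ℝ × ℝ) : EuclideanSpace ℝ (Fin 6) :=
  (WithLp.equiv 2 (Fin 6 → ℝ)).symm
    ![Real.sin (a * p.1) * phi1 a b c p.2,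
      Real.cos (a * p.1) * phi1 a b c p.2,
      Real.sin (b * p.1) * phi2 a b c p.2,
      Real.cos (b * p.1) * phi2 a b c p.2,
      Real.sin (c * p.1) * phi3 a b c p.2,
      Real.cos (c * p.1) * phi3 a b c p.2]

/-!
The six coordinates of `F_{a,b,c}(x, y)` pair up as `(sin θ, cos θ) · φ̃ᵢ(y)`, so the squared norm is
`φ̃₁(y)² + φ̃₂(y)² + φ̃₃(y)²`. The hypotheses make every radicand nonnegative, and after removing
the square roots this sum is affine in `sin² y` (using `cos² y = 1 - sin² y`), with constant term
`1` and vanishing slope.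
-/

section

variable {a b c : ℝ}

theorem phi_coeff_identity (hca : c ^ 2 - a ^ 2 ≠ 0) (hcb : c ^ 2 - b ^ 2 ≠ 0) (s : ℝ) :
    (b ^ 2 + c ^ 2 - a ^ 2) / (2 * (c ^ 2 - a ^ 2)) * s +
        (a ^ 2 + c ^ 2 - b ^ 2) / (2 * (c ^ 2 - b ^ 2)) * (1 - s) +
        (a ^ 2 + b ^ 2 - c ^ 2) / (2 * (b ^ 2 - c ^ 2)) *
          (1 - (b ^ 2 - a ^ 2) / (c ^ 2 - a ^ 2) * s) = 1 := by
  have hbc : b ^ 2 - c ^ 2 ≠ 0 := by rwa [← neg_sub, neg_ne_zero]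
  field_simp
  ring

theorem phi1_sq (ha : a ^ 2 < c ^ 2) (y : ℝ) :
    phi1 a b c y ^ 2 = (b ^ 2 + c ^ 2 - a ^ 2) / (2 * (c ^ 2 - a ^ 2)) * sin y ^ 2 := by
  have hcoeff : 0 ≤ (b ^ 2 + c ^ 2 - a ^ 2) / (2 * (c ^ 2 - a ^ 2)) := by
    apply div_nonneg <;> nlinarith [sq_nonneg b]
  rw [phi1, mul_pow, sq_sqrt hcoeff]

theorem phi2_sq (hb : b ^ 2 < c ^ 2) (y : ℝ) :
    phi2 a b c y ^ 2 = (a ^ 2 + c ^ 2 - b ^ 2) / (2 * (c ^ 2 - b ^ 2)) * cos y ^ 2 := by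
  have hcoeff : 0 ≤ (a ^ 2 + c ^ 2 - b ^ 2) / (2 * (c ^ 2 - b ^ 2)) := by
    apply div_nonneg <;> nlinarith [sq_nonneg a]
  rw [phi2, mul_pow, sq_sqrt hcoeff]

theorem phi3_sq (ha : a ^ 2 < c ^ 2) (hb : b ^ 2 < c ^ 2) (habc : a ^ 2 + b ^ 2 ≤ c ^ 2) (y : ℝ) :
    phi3 a b c y ^ 2 = (a ^ 2 + b ^ 2 - c ^ 2) / (2 * (b ^ 2 - c ^ 2)) *
      (1 - (b ^ 2 - a ^ 2) / (c ^ 2 - a ^ 2) * sin y ^ 2) := by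
  have hcoeff : 0 ≤ (a ^ 2 + b ^ 2 - c ^ 2) / (2 * (b ^ 2 - c ^ 2)) :=
    div_nonneg_of_nonpos (by linarith) (by linarith)
  have hradicand : 0 ≤ 1 - (b ^ 2 - a ^ 2) / (c ^ 2 - a ^ 2) * sin y ^ 2 := by
    rw [sub_nonneg, div_mul_eq_mul_div, div_le_one (by linarith)]
    nlinarith [sin_sq_le_one y, sq_nonneg (sin y)]
  rw [phi3, mul_pow, sq_sqrt hcoeff, sq_sqrt hradicand]

theorem phi1_sq_add_phi2_sq_add_phi3_sq (ha : a ^ 2 < c ^ 2) (hb : b ^ 2 < c ^ 2)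
    (habc : a ^ 2 + b ^ 2 ≤ c ^ 2) (y : ℝ) :
    phi1 a b c y ^ 2 + phi2 a b c y ^ 2 + phi3 a b c y ^ 2 = 1 := by
  rw [phi1_sq ha, phi2_sq hb, phi3_sq ha hb habc, cos_sq']
  exact phi_coeff_identity (by linarith) (by linarith) _

end

theorem norm_Fabc_sq (a b c x y : ℝ) :
    ‖Fabc a b c (x, y)‖ ^ 2 =
      sin (a * x) ^ 2 * phi1 a b c y ^ 2 + cos (a * x) ^ 2 * phi1 a b c y ^ 2 +
        sin (b * x) ^ 2 * phi2 a b c y ^ 2 + cos (b * x) ^ 2 * phi2 a b c y ^ 2 +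
        sin (c * x) ^ 2 * phi3 a b c y ^ 2 + cos (c * x) ^ 2 * phi3 a b c y ^ 2 := by
  simp [Fabc, EuclideanSpace.real_norm_sq_eq, Fin.sum_univ_six, mul_pow]

/-- For all `(x,y) ∈ ℝ²` the Euclidean norm of `F_{a,b,c}(x,y)` is `1`;
equivalently the sum of squares of its components is `1`, so `F_{a,b,c}` maps `ℝ²`
into the unit sphere `S⁵ ⊂ ℝ⁶`. -/
theorem Fabc_mem_sphere (a b c : ℝ) (ha : a ^ 2 < c ^ 2) (hb : b ^ 2 < c ^ 2)
    (habc : a ^ 2 + b ^ 2 ≤ c ^ 2) :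
    ∀ x y : ℝ,
      Real.sin (a * x) ^ 2 * phi1 a b c y ^ 2 + Real.cos (a * x) ^ 2 * phi1 a b c y ^ 2 +
        Real.sin (b * x) ^ 2 * phi2 a b c y ^ 2 + Real.cos (b * x) ^ 2 * phi2 a b c y ^ 2 +
        Real.sin (c * x) ^ 2 * phi3 a b c y ^ 2 + Real.cos (c * x) ^ 2 * phi3 a b c y ^ 2 = 1 ∧
      ‖Fabc a b c (x, y)‖ = 1 ∧
      Fabc a b c (x, y) ∈ Metric.sphere (0 : EuclideanSpace ℝ (Fin 6)) 1 := by
  intro x y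
  have hsum : sin (a * x) ^ 2 * phi1 a b c y ^ 2 + cos (a * x) ^ 2 * phi1 a b c y ^ 2 +
      sin (b * x) ^ 2 * phi2 a b c y ^ 2 + cos (b * x) ^ 2 * phi2 a b c y ^ 2 +
      sin (c * x) ^ 2 * phi3 a b c y ^ 2 + cos (c * x) ^ 2 * phi3 a b c y ^ 2 = 1 := by
    linear_combination phi1 a b c y ^ 2 * sin_sq_add_cos_sq (a * x) +
      phi2 a b c y ^ 2 * sin_sq_add_cos_sq (b * x) + phi3 a b c y ^ 2 * sin_sq_add_cos_sq (c * x) +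
      phi1_sq_add_phi2_sq_add_phi3_sq ha hb habc y
  have hnorm : ‖Fabc a b c (x, y)‖ = 1 := by
    refine (sq_eq_sq₀ (norm_nonneg _) zero_le_one).1 ?_
    rw [norm_Fabc_sq, hsum, one_pow]
  exact ⟨hsum, hnorm, mem_sphere_zero_iff_norm.2 hnorm⟩
end

section
/- For all (x, y) ∈ ℝ², the partial derivatives of F_{a,b,c} satisfy ‖∂F_{a,b,c}/∂x (x,y)‖² = P(y), ⟨∂F_{a,b,c}/∂x (x,y), ∂F_{a,b,c}/∂y (x,y)⟩ = 0, and ‖∂F_{a,b,c}/∂y (x,y)‖² = 2P(y)/(Q + 2P(y)), where the norm and inner product are the Euclidean ones on ℝ⁶; that is, the pullback by F_{a,b,c} of the Euclidean metric is g = P(y) dx² + (2P(y)/(Q + 2P(y))) dy². -/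
open Real

/-!
Identify `ℝ⁶` with `ℂ³`, so that `F(x, y) = (φ̃₁(y) e^{iax}, φ̃₂(y) e^{ibx}, φ̃₃(y) e^{icx})` up to
the order of real and imaginary parts. In each factor `ℂ` the two partial derivatives are real
multiples of `i e^{ikx}` and of `e^{ikx}`, hence orthogonal, and
`‖∂ₓF‖² = a²φ̃₁² + b²φ̃₂² + c²φ̃₃²`, `‖∂_yF‖² = φ̃₁'² + φ̃₂'² + φ̃₃'²`. Since all radicands in the
`φ̃ₖ` are nonnegative, both sums are rational functions of `sin² y`, which simplify to the
stated functions of `P(y)`.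
-/

open RealInnerProductSpace

theorem EuclideanSpace.hasDerivAt_equiv_symm {ι : Type*} [Fintype ι] {f : ℝ → ι → ℝ}
    {f' : ι → ℝ} {x : ℝ} (h : ∀ i, HasDerivAt (fun t => f t i) (f' i) x) :
    HasDerivAt (fun t => (WithLp.equiv 2 (ι → ℝ)).symm (f t)) ((WithLp.equiv 2 (ι → ℝ)).symm f') x :=
  (PiLp.hasFDerivAt_toLp 2 (f x)).comp_hasDerivAt x (hasDerivAt_pi.2 h)

theorem hasDerivAt_sin_mul_mul (x k r : ℝ) :
    HasDerivAt (fun t => sin (k * t) * r) (k * cos (k * x) * r) x := by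
  simpa [mul_comm k] using (((hasDerivAt_id x).const_mul k).sin).mul_const r

theorem hasDerivAt_cos_mul_mul (x k r : ℝ) :
    HasDerivAt (fun t => cos (k * t) * r) (-(k * sin (k * x)) * r) x := by
  simpa [mul_comm k] using (((hasDerivAt_id x).const_mul k).cos).mul_const r

/-- The orbit of `(r₁(y), r₂(y), r₃(y)) ∈ ℂ³ ≅ ℝ⁶` under the one-parameter group
`x ↦ diag(e^{ik₁x}, e^{ik₂x}, e^{ik₃x})`, with each `ℂ` written as (imaginary, real) part. -/
noncomputable def orbitMap (k₁ k₂ k₃ : ℝ) (r₁ r₂ r₃ : ℝ → ℝ) (p : ℝ × ℝ) :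
    EuclideanSpace ℝ (Fin 6) :=
  (WithLp.equiv 2 (Fin 6 → ℝ)).symm
    ![sin (k₁ * p.1) * r₁ p.2, cos (k₁ * p.1) * r₁ p.2,
      sin (k₂ * p.1) * r₂ p.2, cos (k₂ * p.1) * r₂ p.2,
      sin (k₃ * p.1) * r₃ p.2, cos (k₃ * p.1) * r₃ p.2]

theorem Fabc_eq_orbitMap (a b c : ℝ) :
    Fabc a b c = orbitMap a b c (phi1 a b c) (phi2 a b c) (phi3 a b c) := rfl

section orbitMap

variable (k₁ k₂ k₃ : ℝ) (r₁ r₂ r₃ : ℝ → ℝ) (x y : ℝ)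

theorem orbitMap_hasDerivAt_fst :
    HasDerivAt (fun t => orbitMap k₁ k₂ k₃ r₁ r₂ r₃ (t, y))
      ((WithLp.equiv 2 (Fin 6 → ℝ)).symm
        ![k₁ * cos (k₁ * x) * r₁ y, -(k₁ * sin (k₁ * x)) * r₁ y,
          k₂ * cos (k₂ * x) * r₂ y, -(k₂ * sin (k₂ * x)) * r₂ y,
          k₃ * cos (k₃ * x) * r₃ y, -(k₃ * sin (k₃ * x)) * r₃ y]) x := by
  refine EuclideanSpace.hasDerivAt_equiv_symm fun i => ?_
  fin_cases i
  exacts [hasDerivAt_sin_mul_mul x k₁ (r₁ y), hasDerivAt_cos_mul_mul x k₁ (r₁ y),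
    hasDerivAt_sin_mul_mul x k₂ (r₂ y), hasDerivAt_cos_mul_mul x k₂ (r₂ y),
    hasDerivAt_sin_mul_mul x k₃ (r₃ y), hasDerivAt_cos_mul_mul x k₃ (r₃ y)]

theorem orbitMap_norm_sq_deriv_fst :
    ‖deriv (fun t => orbitMap k₁ k₂ k₃ r₁ r₂ r₃ (t, y)) x‖ ^ 2
      = k₁ ^ 2 * r₁ y ^ 2 + k₂ ^ 2 * r₂ y ^ 2 + k₃ ^ 2 * r₃ y ^ 2 := by
  rw [(orbitMap_hasDerivAt_fst ..).deriv, EuclideanSpace.real_norm_sq_eq]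
  simp only [WithLp.equiv_symm_apply, PiLp.toLp_apply, Fin.sum_univ_six, Matrix.cons_val_zero,
    Matrix.cons_val_one, Matrix.cons_val]
  linear_combination (k₁ ^ 2 * r₁ y ^ 2) * sin_sq_add_cos_sq (k₁ * x)
    + (k₂ ^ 2 * r₂ y ^ 2) * sin_sq_add_cos_sq (k₂ * x)
    + (k₃ ^ 2 * r₃ y ^ 2) * sin_sq_add_cos_sq (k₃ * x)

variable {r₁ r₂ r₃} {r₁' r₂' r₃' : ℝ}
  (h₁ : HasDerivAt r₁ r₁' y) (h₂ : HasDerivAt r₂ r₂' y) (h₃ : HasDerivAt r₃ r₃' y)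
include h₁ h₂ h₃

theorem orbitMap_hasDerivAt_snd :
    HasDerivAt (fun t => orbitMap k₁ k₂ k₃ r₁ r₂ r₃ (x, t))
      ((WithLp.equiv 2 (Fin 6 → ℝ)).symm
        ![sin (k₁ * x) * r₁', cos (k₁ * x) * r₁', sin (k₂ * x) * r₂', cos (k₂ * x) * r₂',
          sin (k₃ * x) * r₃', cos (k₃ * x) * r₃']) y := by
  refine EuclideanSpace.hasDerivAt_equiv_symm fun i => ?_
  fin_cases i
  exacts [h₁.const_mul (sin (k₁ * x)), h₁.const_mul (cos (k₁ * x)),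
    h₂.const_mul (sin (k₂ * x)), h₂.const_mul (cos (k₂ * x)),
    h₃.const_mul (sin (k₃ * x)), h₃.const_mul (cos (k₃ * x))]

theorem orbitMap_norm_sq_deriv_snd :
    ‖deriv (fun t => orbitMap k₁ k₂ k₃ r₁ r₂ r₃ (x, t)) y‖ ^ 2 = r₁' ^ 2 + r₂' ^ 2 + r₃' ^ 2 := by
  rw [(orbitMap_hasDerivAt_snd k₁ k₂ k₃ x y h₁ h₂ h₃).deriv, EuclideanSpace.real_norm_sq_eq]
  simp only [WithLp.equiv_symm_apply, PiLp.toLp_apply, Fin.sum_univ_six, Matrix.cons_val_zero,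
    Matrix.cons_val_one, Matrix.cons_val]
  linear_combination r₁' ^ 2 * sin_sq_add_cos_sq (k₁ * x)
    + r₂' ^ 2 * sin_sq_add_cos_sq (k₂ * x) + r₃' ^ 2 * sin_sq_add_cos_sq (k₃ * x)

theorem orbitMap_inner_deriv_fst_deriv_snd :
    ⟪deriv (fun t => orbitMap k₁ k₂ k₃ r₁ r₂ r₃ (t, y)) x,
      deriv (fun t => orbitMap k₁ k₂ k₃ r₁ r₂ r₃ (x, t)) y⟫ = 0 := by
  rw [(orbitMap_hasDerivAt_fst ..).deriv, (orbitMap_hasDerivAt_snd k₁ k₂ k₃ x y h₁ h₂ h₃).deriv]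
  simp only [WithLp.equiv_symm_apply, PiLp.inner_apply, RCLike.inner_apply, conj_trivial, Fin.sum_univ_six, Matrix.cons_val_zero, Matrix.cons_val_one, Matrix.cons_val]
  ring

end orbitMap

section phi
variable {a b c : ℝ} (y : ℝ)

theorem hasDerivAt_phi1 :
    HasDerivAt (phi1 a b c)
      (√((b ^ 2 + c ^ 2 - a ^ 2) / (2 * (c ^ 2 - a ^ 2))) * cos y) y :=
  (hasDerivAt_sin y).const_mul _

theorem hasDerivAt_phi2 :
    HasDerivAt (phi2 a b c)
      (√((a ^ 2 + c ^ 2 - b ^ 2) / (2 * (c ^ 2 - b ^ 2))) * -sin y) y :=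
  (hasDerivAt_cos y).const_mul _

theorem hasDerivAt_phi3 (hu : 1 - (b ^ 2 - a ^ 2) / (c ^ 2 - a ^ 2) * sin y ^ 2 ≠ 0) :
    HasDerivAt (phi3 a b c)
      (√((a ^ 2 + b ^ 2 - c ^ 2) / (2 * (b ^ 2 - c ^ 2))) *
        (-((b ^ 2 - a ^ 2) / (c ^ 2 - a ^ 2) * sin y * cos y) /
          √(1 - (b ^ 2 - a ^ 2) / (c ^ 2 - a ^ 2) * sin y ^ 2))) y := by
  have hsin_sq := ((hasDerivAt_sin y).fun_pow 2).const_mul ((b ^ 2 - a ^ 2) / (c ^ 2 - a ^ 2))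
  refine (((hsin_sq.const_sub 1).sqrt hu).const_mul _).congr_deriv ?_
  field_simp
  ring

theorem one_sub_div_mul_sin_sq_eq (hca : c ^ 2 - a ^ 2 ≠ 0) :
    1 - (b ^ 2 - a ^ 2) / (c ^ 2 - a ^ 2) * sin y ^ 2
      = (c ^ 2 - a ^ 2 - sin y ^ 2 * (b ^ 2 - a ^ 2)) / (c ^ 2 - a ^ 2) := by
  field_simp

variable (ha : a ^ 2 < c ^ 2) (hb : b ^ 2 < c ^ 2)
include ha hb

theorem sub_sin_sq_mul_pos : 0 < c ^ 2 - a ^ 2 - sin y ^ 2 * (b ^ 2 - a ^ 2) := by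
  rcases (sin_sq_le_one y).lt_or_eq with hs | hs
  · nlinarith [sq_nonneg (sin y)]
  · rw [hs]
    linarith

theorem one_sub_div_mul_sin_sq_pos : 0 < 1 - (b ^ 2 - a ^ 2) / (c ^ 2 - a ^ 2) * sin y ^ 2 := by
  rw [one_sub_div_mul_sin_sq_eq y (by linarith)]
  exact div_pos (sub_sin_sq_mul_pos y ha hb) (by linarith)

variable (habc : a ^ 2 + b ^ 2 ≤ c ^ 2)
include habc

theorem phi_coeffs_nonneg :
    0 ≤ (b ^ 2 + c ^ 2 - a ^ 2) / (2 * (c ^ 2 - a ^ 2)) ∧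
      0 ≤ (a ^ 2 + c ^ 2 - b ^ 2) / (2 * (c ^ 2 - b ^ 2)) ∧
      0 ≤ (a ^ 2 + b ^ 2 - c ^ 2) / (2 * (b ^ 2 - c ^ 2)) :=
  ⟨div_nonneg (by nlinarith) (by linarith), div_nonneg (by nlinarith) (by linarith),
    div_nonneg_of_nonpos (by linarith) (by linarith)⟩

theorem sq_mul_phi_sq_sum :
    a ^ 2 * phi1 a b c y ^ 2 + b ^ 2 * phi2 a b c y ^ 2 + c ^ 2 * phi3 a b c y ^ 2
      = (c ^ 2 + (b ^ 2 - a ^ 2) * cos (2 * y)) / 2 := by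
  obtain ⟨hA, hB, hC⟩ := phi_coeffs_nonneg ha hb habc
  have hu := one_sub_div_mul_sin_sq_pos y ha hb
  have hca : c ^ 2 - a ^ 2 ≠ 0 := by linarith
  have hcb : c ^ 2 - b ^ 2 ≠ 0 := by linarith
  have hbc : b ^ 2 - c ^ 2 ≠ 0 := by linarith
  simp only [phi1, phi2, phi3, mul_pow, sq_sqrt hA, sq_sqrt hB, sq_sqrt hC, sq_sqrt hu.le,
    cos_sq', cos_two_mul]
  field_simp
  ring

theorem deriv_phi_sq_sum :
    (√((b ^ 2 + c ^ 2 - a ^ 2) / (2 * (c ^ 2 - a ^ 2))) * cos y) ^ 2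
      + (√((a ^ 2 + c ^ 2 - b ^ 2) / (2 * (c ^ 2 - b ^ 2))) * -sin y) ^ 2
      + (√((a ^ 2 + b ^ 2 - c ^ 2) / (2 * (b ^ 2 - c ^ 2))) *
          (-((b ^ 2 - a ^ 2) / (c ^ 2 - a ^ 2) * sin y * cos y) /
            √(1 - (b ^ 2 - a ^ 2) / (c ^ 2 - a ^ 2) * sin y ^ 2))) ^ 2
      = 2 * ((c ^ 2 + (b ^ 2 - a ^ 2) * cos (2 * y)) / 2) /
          ((c ^ 2 - a ^ 2 - b ^ 2) + 2 * ((c ^ 2 + (b ^ 2 - a ^ 2) * cos (2 * y)) / 2)) := by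
  obtain ⟨hA, hB, hC⟩ := phi_coeffs_nonneg ha hb habc
  have hu := one_sub_div_mul_sin_sq_pos y ha hb
  have hden_ne := (sub_sin_sq_mul_pos y ha hb).ne'
  have hca : c ^ 2 - a ^ 2 ≠ 0 := by linarith
  have hcb : c ^ 2 - b ^ 2 ≠ 0 := by linarith
  have hbc : b ^ 2 - c ^ 2 ≠ 0 := by linarith
  have hden : (c ^ 2 - a ^ 2 - b ^ 2) + 2 * ((c ^ 2 + (b ^ 2 - a ^ 2) * cos (2 * y)) / 2)
      = 2 * (c ^ 2 - a ^ 2 - sin y ^ 2 * (b ^ 2 - a ^ 2)) := by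
    rw [cos_two_mul, cos_sq']
    ring
  rw [hden, cos_two_mul]
  simp only [mul_pow, div_pow, neg_sq, sq_sqrt hA, sq_sqrt hB, sq_sqrt hC, sq_sqrt hu.le, cos_sq']
  rw [one_sub_div_mul_sin_sq_eq y hca]
  field_simp
  ring

end phi

open RealInnerProductSpace in
/-- The partial derivatives of `F_{a,b,c}` satisfy
`‖∂F/∂x‖² = P(y)`, `⟨∂F/∂x, ∂F/∂y⟩ = 0` and `‖∂F/∂y‖² = 2P(y)/(Q+2P(y))`,
where `P(y) = (c² + (b²−a²)cos 2y)/2` and `Q = c² − a² − b²`; that is, the pullback of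
the Euclidean metric is `g = P(y)dx² + (2P(y)/(Q+2P(y)))dy²`. -/
theorem Fabc_pullback_metric (a b c : ℝ) (ha : a ^ 2 < c ^ 2) (hb : b ^ 2 < c ^ 2)
    (habc : a ^ 2 + b ^ 2 ≤ c ^ 2) :
    ∀ x y : ℝ,
      ‖deriv (fun t : ℝ => Fabc a b c (t, y)) x‖ ^ 2
          = (c ^ 2 + (b ^ 2 - a ^ 2) * Real.cos (2 * y)) / 2 ∧
      ⟪deriv (fun t : ℝ => Fabc a b c (t, y)) x,
          deriv (fun t : ℝ => Fabc a b c (x, t)) y⟫ = 0 ∧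
      ‖deriv (fun t : ℝ => Fabc a b c (x, t)) y‖ ^ 2
          = 2 * ((c ^ 2 + (b ^ 2 - a ^ 2) * Real.cos (2 * y)) / 2) /
            ((c ^ 2 - a ^ 2 - b ^ 2) + 2 * ((c ^ 2 + (b ^ 2 - a ^ 2) * Real.cos (2 * y)) / 2)) := by
  intro x y
  have h₁ : HasDerivAt (phi1 a b c) _ y := hasDerivAt_phi1 y
  have h₂ : HasDerivAt (phi2 a b c) _ y := hasDerivAt_phi2 y
  have h₃ := hasDerivAt_phi3 y (one_sub_div_mul_sin_sq_pos y ha hb).ne'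
  rw [Fabc_eq_orbitMap]
  refine ⟨?_, orbitMap_inner_deriv_fst_deriv_snd a b c x y h₁ h₂ h₃, ?_⟩
  · rw [orbitMap_norm_sq_deriv_fst]
    exact sq_mul_phi_sq_sum y ha hb habc
  · rw [orbitMap_norm_sq_deriv_snd a b c x y h₁ h₂ h₃]
    exact deriv_phi_sq_sum y ha hb habc
end

section
/- For all y ∈ ℝ one has P(y) > 0 and Q + 2P(y) > 0, and the total (Fréchet) derivative of F_{a,b,c} at every point of ℝ² is an injective linear map ℝ² → ℝ⁶; in other words, F_{a,b,c} is an immersion. -/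
open Real


noncomputable def lmrr (cu cv : ℝ) : ℝ × ℝ →L[ℝ] ℝ :=
  cu • ContinuousLinearMap.fst ℝ ℝ ℝ + cv • ContinuousLinearMap.snd ℝ ℝ ℝ

lemma lmrr_apply (cu cv : ℝ) (w : ℝ × ℝ) : lmrr cu cv w = cu * w.1 + cv * w.2 := by
  simp [lmrr, smul_eq_mul]

lemma hasFDerivAt_mul_comp (f g : ℝ → ℝ) (f' g' : ℝ) (p : ℝ × ℝ)
    (hf : HasDerivAt f f' p.1) (hg : HasDerivAt g g' p.2) :
    HasFDerivAt (fun q : ℝ × ℝ => f q.1 * g q.2) (lmrr (f' * g p.2) (f p.1 * g')) p := by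
  have h1 : HasFDerivAt (fun q : ℝ × ℝ => f q.1)
      (((1 : ℝ →L[ℝ] ℝ).smulRight f').comp (ContinuousLinearMap.fst ℝ ℝ ℝ)) p :=
    hf.hasFDerivAt.comp p hasFDerivAt_fst
  have h2 : HasFDerivAt (fun q : ℝ × ℝ => g q.2)
      (((1 : ℝ →L[ℝ] ℝ).smulRight g').comp (ContinuousLinearMap.snd ℝ ℝ ℝ)) p :=
    hg.hasFDerivAt.comp p hasFDerivAt_snd
  refine (h1.mul h2).congr_fderiv (ContinuousLinearMap.ext fun w => ?_)
  simp [lmrr, smul_eq_mul]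
  ring

lemma pos_combo {X Y s t : ℝ} (hX : 0 < X) (hY : 0 < Y) (hs : 0 ≤ s) (ht : 0 ≤ t)
    (h1 : s + t = 1) : 0 < X * s + Y * t := by
  rcases hs.lt_or_eq with h | h
  · nlinarith [mul_pos hX h, mul_nonneg hY.le ht]
  · nlinarith


set_option maxHeartbeats 1000000 in
/-- For all `y` one has `P(y) > 0` and `Q + 2P(y) > 0`, where
`P(y) = (c² + (b²−a²)cos 2y)/2` and `Q = c² − a² − b²`, and the total (Fréchet)
derivative of `F_{a,b,c}` at every point of `ℝ²` is an injective linear map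
`ℝ² → ℝ⁶`; in other words, `F_{a,b,c}` is an immersion. -/
theorem Fabc_immersion (a b c : ℝ) (ha : a ^ 2 < c ^ 2) (hb : b ^ 2 < c ^ 2)
    (habc : a ^ 2 + b ^ 2 ≤ c ^ 2) :
    (∀ y : ℝ, 0 < (c ^ 2 + (b ^ 2 - a ^ 2) * Real.cos (2 * y)) / 2 ∧
      0 < (c ^ 2 - a ^ 2 - b ^ 2) + 2 * ((c ^ 2 + (b ^ 2 - a ^ 2) * Real.cos (2 * y)) / 2)) ∧
    ∀ p : ℝ × ℝ, Function.Injective (fderiv ℝ (Fabc a b c) p) := by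
  have h0a : (0:ℝ) ≤ a ^ 2 := sq_nonneg a
  have h0b : (0:ℝ) ≤ b ^ 2 := sq_nonneg b
  constructor
  · intro y
    have h1 := Real.neg_one_le_cos (2 * y)
    have h2 := Real.cos_le_one (2 * y)
    have key : -(c ^ 2) < (b ^ 2 - a ^ 2) * Real.cos (2 * y) ∧
        -(2 * c ^ 2 - a ^ 2 - b ^ 2) ≤ (b ^ 2 - a ^ 2) * Real.cos (2 * y) := by
      rcases le_total (a ^ 2) (b ^ 2) with h | h
      · have h3 := mul_nonneg (sub_nonneg.mpr h) (by linarith : (0:ℝ) ≤ Real.cos (2 * y) + 1)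
        constructor <;> nlinarith
      · have h3 := mul_nonneg (sub_nonneg.mpr h) (by linarith : (0:ℝ) ≤ 1 - Real.cos (2 * y))
        constructor <;> nlinarith
    constructor
    · linarith [key.1]
    · linarith [key.2]
  intro p
  obtain ⟨x, y⟩ := p
  -- abbreviations
  set A1 : ℝ := (b ^ 2 + c ^ 2 - a ^ 2) / (2 * (c ^ 2 - a ^ 2)) with hA1def
  set A2 : ℝ := (a ^ 2 + c ^ 2 - b ^ 2) / (2 * (c ^ 2 - b ^ 2)) with hA2def
  set A3 : ℝ := (a ^ 2 + b ^ 2 - c ^ 2) / (2 * (b ^ 2 - c ^ 2)) with hA3def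
  set k : ℝ := (b ^ 2 - a ^ 2) / (c ^ 2 - a ^ 2) with hkdef
  have hca : (0:ℝ) < c ^ 2 - a ^ 2 := by linarith
  have hcb : (0:ℝ) < c ^ 2 - b ^ 2 := by linarith
  have hA1 : 0 < A1 := div_pos (by nlinarith) (by linarith)
  have hA2 : 0 < A2 := div_pos (by nlinarith) (by linarith)
  have hA3 : 0 ≤ A3 := div_nonneg_of_nonpos (by linarith) (by linarith)
  have hk1 : k < 1 := (div_lt_one hca).mpr (by linarith)
  have hS : ∀ t : ℝ, 0 < 1 - k * Real.sin t ^ 2 := by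
    intro t
    have h1 : Real.sin t ^ 2 ≤ 1 := Real.sin_sq_le_one t
    have h2 : (0:ℝ) ≤ Real.sin t ^ 2 := sq_nonneg _
    rcases le_or_gt k 0 with hk | hk
    · nlinarith
    · nlinarith
  -- derivatives of the phi's
  have hD1 : HasDerivAt (phi1 a b c) (Real.sqrt A1 * Real.cos y) y := by
    unfold phi1; rw [← hA1def]; exact (Real.hasDerivAt_sin y).const_mul _
  have hD2 : HasDerivAt (phi2 a b c) (Real.sqrt A2 * (-Real.sin y)) y := by
    unfold phi2; rw [← hA2def]; exact (Real.hasDerivAt_cos y).const_mul _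
  obtain ⟨D3, hD3⟩ : ∃ d, HasDerivAt (phi3 a b c) d y := by
    have hs : HasDerivAt (fun t => 1 - k * Real.sin t ^ 2)
        (-(k * (2 * Real.sin y ^ 1 * Real.cos y))) y := by
      exact (((Real.hasDerivAt_sin y).pow 2).const_mul k).const_sub 1
    have hsq := hs.sqrt (hS y).ne'
    have h3' : HasDerivAt (phi3 a b c)
        (Real.sqrt A3 * (-(k * (2 * Real.sin y ^ 1 * Real.cos y)) /
          (2 * Real.sqrt (1 - k * Real.sin y ^ 2)))) y := by
      unfold phi3; rw [← hA3def, ← hkdef]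
      exact hsq.const_mul (Real.sqrt A3)
    exact ⟨_, h3'⟩
  set D1 : ℝ := Real.sqrt A1 * Real.cos y with hD1def
  set D2 : ℝ := Real.sqrt A2 * (-Real.sin y) with hD2def
  set P1 : ℝ := phi1 a b c y with hP1def
  set P2 : ℝ := phi2 a b c y with hP2def
  set P3 : ℝ := phi3 a b c y with hP3def
  -- derivatives of the trig factors in x
  have ht : ∀ e : ℝ, HasDerivAt (fun t => Real.sin (e * t)) (Real.cos (e * x) * e) x ∧
      HasDerivAt (fun t => Real.cos (e * t)) (-Real.sin (e * x) * e) x := by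
    intro e
    constructor
    · simpa using ((hasDerivAt_id x).const_mul e).sin
    · simpa using ((hasDerivAt_id x).const_mul e).cos
  -- the six component derivatives
  set L : Fin 6 → (ℝ × ℝ →L[ℝ] ℝ) :=
    ![lmrr (Real.cos (a * x) * a * P1) (Real.sin (a * x) * D1),
      lmrr (-Real.sin (a * x) * a * P1) (Real.cos (a * x) * D1),
      lmrr (Real.cos (b * x) * b * P2) (Real.sin (b * x) * D2),
      lmrr (-Real.sin (b * x) * b * P2) (Real.cos (b * x) * D2),
      lmrr (Real.cos (c * x) * c * P3) (Real.sin (c * x) * D3),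
      lmrr (-Real.sin (c * x) * c * P3) (Real.cos (c * x) * D3)] with hLdef
  have hΦ : HasFDerivAt (fun p : ℝ × ℝ =>
      (![Real.sin (a * p.1) * phi1 a b c p.2,
        Real.cos (a * p.1) * phi1 a b c p.2,
        Real.sin (b * p.1) * phi2 a b c p.2,
        Real.cos (b * p.1) * phi2 a b c p.2,
        Real.sin (c * p.1) * phi3 a b c p.2,
        Real.cos (c * p.1) * phi3 a b c p.2] : Fin 6 → ℝ))
      (ContinuousLinearMap.pi L) (x, y) := by
    apply hasFDerivAt_pi''
    intro i
    rw [ContinuousLinearMap.proj_pi]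
    fin_cases i <;>
      simp only [hLdef, Matrix.cons_val_zero, Matrix.cons_val_one, Matrix.head_cons,
        Matrix.cons_val_two, Matrix.tail_cons, Matrix.cons_val_three, Matrix.cons_val_four,
        Fin.mk_zero, Fin.mk_one, Matrix.cons_val_fin_one, Matrix.cons_val']
    · exact hasFDerivAt_mul_comp _ _ _ _ (x, y) (ht a).1 hD1
    · exact hasFDerivAt_mul_comp _ _ _ _ (x, y) (ht a).2 hD1
    · exact hasFDerivAt_mul_comp _ _ _ _ (x, y) (ht b).1 hD2
    · exact hasFDerivAt_mul_comp _ _ _ _ (x, y) (ht b).2 hD2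
    · exact hasFDerivAt_mul_comp _ _ _ _ (x, y) (ht c).1 hD3
    · exact hasFDerivAt_mul_comp _ _ _ _ (x, y) (ht c).2 hD3
  set T := ContinuousLinearMap.pi L with hTdef
  set E := (EuclideanSpace.equiv (Fin 6) ℝ).symm with hEdef
  have hF : HasFDerivAt (Fabc a b c) (E.toContinuousLinearMap.comp T) (x, y) :=
    E.toContinuousLinearMap.hasFDerivAt.comp (x, y) hΦ
  rw [hF.fderiv]
  intro z w hzw
  have h1 : (E.toContinuousLinearMap.comp T) (z - w) = 0 := by
    rw [map_sub, hzw, sub_self]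
  have h0 : T (z - w) = 0 := by
    rw [← ContinuousLinearEquiv.map_eq_zero_iff E]
    simpa using h1
  have hi : ∀ i : Fin 6, L i (z - w) = 0 := fun i => by
    rw [← ContinuousLinearMap.pi_apply (f := L), ← hTdef, h0]; rfl
  have e0 := hi 0
  have e1 := hi 1
  have e2 := hi 2
  have e3 := hi 3
  have e4 := hi 4
  have e5 : -Real.sin (c * x) * c * P3 * (z - w).1 + Real.cos (c * x) * D3 * (z - w).2 = 0 := by
    have h := hi 5
    rw [show L 5 = lmrr (-Real.sin (c * x) * c * P3) (Real.cos (c * x) * D3) from rfl,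
      lmrr_apply] at h
    exact h
  simp only [hLdef, Matrix.cons_val_zero, Matrix.cons_val_one, Matrix.head_cons,
    Matrix.cons_val_two, Matrix.tail_cons, Matrix.cons_val_three, Matrix.cons_val_four,
    Matrix.cons_val_succ, Matrix.cons_val', Matrix.cons_val_fin_one, lmrr_apply,
    Fin.isValue] at e0 e1 e2 e3 e4
  set u := (z - w).1 with hudef
  set v := (z - w).2 with hvdef
  have hu1 : a * P1 * u = 0 := by
    linear_combination Real.cos (a * x) * e0 - Real.sin (a * x) * e1 -
      (a * P1 * u) * (Real.sin_sq_add_cos_sq (a * x))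
  have hu2 : b * P2 * u = 0 := by
    linear_combination Real.cos (b * x) * e2 - Real.sin (b * x) * e3 -
      (b * P2 * u) * (Real.sin_sq_add_cos_sq (b * x))
  have hu3 : c * P3 * u = 0 := by
    linear_combination Real.cos (c * x) * e4 - Real.sin (c * x) * e5 -
      (c * P3 * u) * (Real.sin_sq_add_cos_sq (c * x))
  have hv1 : D1 * v = 0 := by
    linear_combination Real.sin (a * x) * e0 + Real.cos (a * x) * e1 -
      (D1 * v) * (Real.sin_sq_add_cos_sq (a * x))
  have hv2 : D2 * v = 0 := by
    linear_combination Real.sin (b * x) * e2 + Real.cos (b * x) * e3 -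
      (D2 * v) * (Real.sin_sq_add_cos_sq (b * x))
  -- squares of the phi's
  have hP1sq : P1 ^ 2 = A1 * Real.sin y ^ 2 := by
    rw [hP1def]; unfold phi1; rw [← hA1def, mul_pow, Real.sq_sqrt hA1.le]
  have hP2sq : P2 ^ 2 = A2 * Real.cos y ^ 2 := by
    rw [hP2def]; unfold phi2; rw [← hA2def, mul_pow, Real.sq_sqrt hA2.le]
  have hP3sq : P3 ^ 2 = A3 * (1 - k * Real.sin y ^ 2) := by
    rw [hP3def]; unfold phi3; rw [← hA3def, ← hkdef, mul_pow, Real.sq_sqrt hA3,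
      Real.sq_sqrt (hS y).le]
  have hD1sq : D1 ^ 2 = A1 * Real.cos y ^ 2 := by
    rw [hD1def, mul_pow, Real.sq_sqrt hA1.le]
  have hD2sq : D2 ^ 2 = A2 * Real.sin y ^ 2 := by
    rw [hD2def, mul_pow, Real.sq_sqrt hA2.le]; ring
  -- u = 0
  have hu1' : a ^ 2 * (A1 * Real.sin y ^ 2) * u = 0 := by
    rw [← hP1sq]; linear_combination a * P1 * hu1
  have hu2' : b ^ 2 * (A2 * Real.cos y ^ 2) * u = 0 := by
    rw [← hP2sq]; linear_combination b * P2 * hu2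
  have hu3' : c ^ 2 * (A3 * (1 - k * Real.sin y ^ 2)) * u = 0 := by
    rw [← hP3sq]; linear_combination c * P3 * hu3
  have husum : (a ^ 2 * (A1 * Real.sin y ^ 2) + b ^ 2 * (A2 * Real.cos y ^ 2) +
      c ^ 2 * (A3 * (1 - k * Real.sin y ^ 2))) * u = 0 := by
    linear_combination hu1' + hu2' + hu3'
  have hupos : 0 < a ^ 2 * (A1 * Real.sin y ^ 2) + b ^ 2 * (A2 * Real.cos y ^ 2) +
      c ^ 2 * (A3 * (1 - k * Real.sin y ^ 2)) := by
    rcases eq_or_lt_of_le habc with heq | hlt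
    · have hnum : a ^ 2 + b ^ 2 - c ^ 2 = 0 := by linarith
      have hA3z : A3 = 0 := by rw [hA3def, hnum, zero_div]
      have ha0 : 0 < a ^ 2 := by linarith only [heq, hb]
      have hb0 : 0 < b ^ 2 := by linarith only [heq, ha]
      have hzero : c ^ 2 * (A3 * (1 - k * Real.sin y ^ 2)) = 0 := by rw [hA3z]; ring
      have hmain := pos_combo (mul_pos ha0 hA1) (mul_pos hb0 hA2) (sq_nonneg (Real.sin y))
        (sq_nonneg (Real.cos y)) (Real.sin_sq_add_cos_sq y)
      nlinarith only [hmain, hzero]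
    · have hA3p : 0 < A3 := by
        rw [hA3def]; exact div_pos_of_neg_of_neg (by linarith) (by linarith)
      have hc2 : 0 < c ^ 2 := by linarith only [h0a, ha]
      nlinarith only [mul_pos (mul_pos hc2 hA3p) (hS y),
        mul_nonneg (mul_nonneg h0a hA1.le) (sq_nonneg (Real.sin y)),
        mul_nonneg (mul_nonneg h0b hA2.le) (sq_nonneg (Real.cos y))]
  have hu0 : u = 0 := by
    rcases mul_eq_zero.mp husum with h | h
    · exact absurd h hupos.ne'
    · exact h
  -- v = 0
  have hv1' : A1 * Real.cos y ^ 2 * v = 0 := by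
    rw [← hD1sq]; linear_combination D1 * hv1
  have hv2' : A2 * Real.sin y ^ 2 * v = 0 := by
    rw [← hD2sq]; linear_combination D2 * hv2
  have hvsum : (A1 * Real.cos y ^ 2 + A2 * Real.sin y ^ 2) * v = 0 := by
    linear_combination hv1' + hv2'
  have hvpos : 0 < A1 * Real.cos y ^ 2 + A2 * Real.sin y ^ 2 :=
    pos_combo hA1 hA2 (sq_nonneg (Real.cos y)) (sq_nonneg (Real.sin y))
      (Real.cos_sq_add_sin_sq y)
  have hv0 : v = 0 := by
    rcases mul_eq_zero.mp hvsum with h | h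
    · exact absurd h hvpos.ne'
    · exact h
  have : z - w = 0 := Prod.ext hu0 hv0
  exact sub_eq_zero.mp this
end

section
/- The function φ̃₁ satisfies, for all y ∈ ℝ, the separated eigenvalue equation with eigenvalue λ = 2 and angular parameter l = a: (1 + Q/(2P(y)))·φ̃₁''(y) + (P'(y)/(2P(y)))·φ̃₁'(y) + (2 − a²/P(y))·φ̃₁(y) = 0. -/
open Real

/-- `P(y) = (c² + (b²−a²)·cos 2y)/2`. -/
noncomputable def Pm (a b c y : ℝ) : ℝ := (c ^ 2 + (b ^ 2 - a ^ 2) * Real.cos (2 * y)) / 2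

/-- `Q = c² − a² − b²`. -/
noncomputable def Qm (a b c : ℝ) : ℝ := c ^ 2 - a ^ 2 - b ^ 2

/-!
Since `φ̃₁ = K sin y`, we have `φ̃₁'' = -φ̃₁`, and after multiplying by `2P` the equation reads
`K (sin y · (2P − Q − 2a²) + P' cos y) = 0`. Both `2P − Q − 2a² = 2(b²−a²) cos² y` and
`P' = −2(b²−a²) sin y cos y` carry the factor `(b²−a²) cos y`, and the two terms cancel.
-/

lemma Pm_pos {a b c : ℝ} (ha : a ^ 2 < c ^ 2) (hb : b ^ 2 < c ^ 2) (y : ℝ) :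
    0 < Pm a b c y := by
  have hlo := neg_one_le_cos (2 * y)
  have hhi := cos_le_one (2 * y)
  unfold Pm
  rcases le_or_gt 0 (b ^ 2 - a ^ 2) with h | h <;> nlinarith

lemma hasDerivAt_Pm (a b c y : ℝ) :
    HasDerivAt (Pm a b c) (-((b ^ 2 - a ^ 2) * sin (2 * y))) y := by
  have h := ((((hasDerivAt_id' y).const_mul 2).cos.const_mul (b ^ 2 - a ^ 2)).const_add
    (c ^ 2)).div_const 2
  exact h.congr_deriv (by ring)

lemma two_mul_Pm_sub_Qm_sub_two_mul_sq (a b c y : ℝ) :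
    2 * Pm a b c y - Qm a b c - 2 * a ^ 2 = 2 * (b ^ 2 - a ^ 2) * cos y ^ 2 := by
  unfold Pm Qm
  rw [cos_two_mul]
  ring

lemma deriv_const_mul_sin (K : ℝ) : deriv (fun y => K * sin y) = fun y => K * cos y := by
  funext y
  exact ((hasDerivAt_sin y).const_mul K).deriv

lemma deriv_deriv_const_mul_sin (K y : ℝ) :
    deriv (deriv (fun y => K * sin y)) y = -(K * sin y) := by
  rw [deriv_const_mul_sin]
  exact ((hasDerivAt_cos y).const_mul K).deriv.trans (by ring)

lemma separated_equation_const_mul_sin (a b c K y : ℝ) (hP : Pm a b c y ≠ 0) :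
    (1 + Qm a b c / (2 * Pm a b c y)) * deriv (deriv (fun y => K * sin y)) y
      + deriv (Pm a b c) y / (2 * Pm a b c y) * deriv (fun y => K * sin y) y
      + (2 - a ^ 2 / Pm a b c y) * (K * sin y) = 0 := by
  have hquad := two_mul_Pm_sub_Qm_sub_two_mul_sq a b c y
  rw [deriv_deriv_const_mul_sin, (hasDerivAt_Pm a b c y).deriv, deriv_const_mul_sin, sin_two_mul]
  field_simp
  linear_combination (K * sin y) * hquad

theorem phi1_separated_equation_general (a b c : ℝ) (ha : a ^ 2 < c ^ 2) (hb : b ^ 2 < c ^ 2) :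
    ∀ y : ℝ,
      (1 + Qm a b c / (2 * Pm a b c y)) * deriv (deriv (phi1 a b c)) y
        + deriv (Pm a b c) y / (2 * Pm a b c y) * deriv (phi1 a b c) y
        + (2 - a ^ 2 / Pm a b c y) * phi1 a b c y = 0 :=
  fun y => separated_equation_const_mul_sin a b c _ y (Pm_pos ha hb y).ne'

/-- The function `φ̃` satisfies, for all `y ∈ ℝ`, the separated
eigenvalue equation with eigenvalue `λ = 2` and angular parameter `l = a`:
`(1 + Q/(2P(y)))·φ̃'' + (P'(y)/(2P(y)))·φ̃' + (2 − l²/P(y))·φ̃ = 0`. -/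
theorem phi1_separated_equation (a b c : ℝ) (ha : a ^ 2 < c ^ 2) (hb : b ^ 2 < c ^ 2)
    (habc : a ^ 2 + b ^ 2 ≤ c ^ 2) :
    ∀ y : ℝ,
      (1 + Qm a b c / (2 * Pm a b c y)) * deriv (deriv (phi1 a b c)) y
        + deriv (Pm a b c) y / (2 * Pm a b c y) * deriv (phi1 a b c) y
        + (2 - a ^ 2 / Pm a b c y) * phi1 a b c y = 0 :=
  phi1_separated_equation_general a b c ha hb
end

section
/- Suppose a, b, c are integers with a² < c², b² < c² and a² + b² ≤ c², such that a is odd and b and c are even. Then the transformation Φ₂(x, y) = (x + π, −y) satisfies F_{a,b,c} ∘ Φ₂ = F_{a,b,c}; that is, F_{a,b,c}(x + π, −y) = F_{a,b,c}(x, y) for all (x, y) ∈ ℝ². -/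
open Real

lemma cos_odd_pi {a : ℤ} (h : Odd a) : Real.cos ((a : ℝ) * π) = -1 := by
  obtain ⟨k, rfl⟩ := h
  have : ((2*k+1 : ℤ) : ℝ) * π = π + k * (2 * π) := by push_cast; ring
  rw [this, Real.cos_add_int_mul_two_pi, Real.cos_pi]

lemma cos_even_pi {a : ℤ} (h : Even a) : Real.cos ((a : ℝ) * π) = 1 := by
  obtain ⟨k, rfl⟩ := h
  have : ((k + k : ℤ) : ℝ) * π = 0 + k * (2 * π) := by push_cast; ring
  rw [this, Real.cos_add_int_mul_two_pi, Real.cos_zero]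

/-- If `a` is odd and `b`, `c` are even, then `Φ₂(x,y) = (x+π, −y)` satisfies `F_{a,b,c} ∘ Φ₂ = F_{a,b,c}`. -/
theorem Fabc_invariant_Phi2 (a b c : ℤ) (ha : (a : ℝ) ^ 2 < (c : ℝ) ^ 2) (hb : (b : ℝ) ^ 2 < (c : ℝ) ^ 2)
    (habc : (a : ℝ) ^ 2 + (b : ℝ) ^ 2 ≤ (c : ℝ) ^ 2) (hpa : Odd a) (hpb : Even b) (hpc : Even c) :
    ∀ x y : ℝ, Fabc (a : ℝ) (b : ℝ) (c : ℝ) (x + Real.pi, -y) = Fabc (a : ℝ) (b : ℝ) (c : ℝ) (x, y) := by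
  intro x y
  unfold Fabc phi1 phi2 phi3
  simp only [mul_add, Real.sin_add, Real.cos_add, Real.sin_int_mul_pi,
    cos_odd_pi hpa, cos_even_pi hpb, cos_even_pi hpc, Real.sin_neg, Real.cos_neg,
    neg_neg, mul_zero, zero_mul, add_zero, sub_zero, mul_one, mul_neg_one]
  congr 1
  funext i
  fin_cases i <;> simp <;> ring
end

section
/- Suppose a, b, c are integers with a² < c², b² < c² and a² + b² ≤ c², such that a and c are even and b is odd. Then the transformation Φ₁(x, y) = (x + π, π − y) satisfies F_{a,b,c} ∘ Φ₁ = F_{a,b,c}; that is, F_{a,b,c}(x + π, π − y) = F_{a,b,c}(x, y) for all (x, y) ∈ ℝ². -/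
open Real

lemma sin_k_two_pi (k : ℤ) : Real.sin ((k : ℝ) * (2 * Real.pi)) = 0 := by
  have h : (k : ℝ) * (2 * Real.pi) = ((2 * k : ℤ) : ℝ) * Real.pi := by push_cast; ring
  rw [h, Real.sin_int_mul_pi]

lemma sin_even_shift (a : ℤ) (hpa : Even a) (x : ℝ) :
    Real.sin ((a : ℝ) * (x + Real.pi)) = Real.sin ((a : ℝ) * x) := by
  obtain ⟨k, hk⟩ := hpa
  have : (a : ℝ) * (x + Real.pi) = (a : ℝ) * x + (k : ℝ) * (2 * Real.pi) := by
    push_cast [hk]; ring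
  rw [this, Real.sin_add, Real.cos_int_mul_two_pi, sin_k_two_pi]; ring

lemma cos_even_shift (a : ℤ) (hpa : Even a) (x : ℝ) :
    Real.cos ((a : ℝ) * (x + Real.pi)) = Real.cos ((a : ℝ) * x) := by
  obtain ⟨k, hk⟩ := hpa
  have : (a : ℝ) * (x + Real.pi) = (a : ℝ) * x + (k : ℝ) * (2 * Real.pi) := by
    push_cast [hk]; ring
  rw [this, Real.cos_add, Real.cos_int_mul_two_pi, sin_k_two_pi]; ring

lemma sin_odd_shift (b : ℤ) (hpb : Odd b) (x : ℝ) :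
    Real.sin ((b : ℝ) * (x + Real.pi)) = -Real.sin ((b : ℝ) * x) := by
  obtain ⟨k, hk⟩ := hpb
  have : (b : ℝ) * (x + Real.pi) = ((b : ℝ) * x + (k : ℝ) * (2 * Real.pi)) + Real.pi := by
    push_cast [hk]; ring
  rw [this, Real.sin_add_pi, Real.sin_add, Real.cos_int_mul_two_pi,
    sin_k_two_pi]; ring

lemma cos_odd_shift (b : ℤ) (hpb : Odd b) (x : ℝ) :
    Real.cos ((b : ℝ) * (x + Real.pi)) = -Real.cos ((b : ℝ) * x) := by
  obtain ⟨k, hk⟩ := hpb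
  have : (b : ℝ) * (x + Real.pi) = ((b : ℝ) * x + (k : ℝ) * (2 * Real.pi)) + Real.pi := by
    push_cast [hk]; ring
  rw [this, Real.cos_add_pi, Real.cos_add, Real.cos_int_mul_two_pi,
    sin_k_two_pi]; ring

/-- If `a` and `c` are even and `b` is odd, then `Φ₁(x,y) = (x+π, π−y)` satisfies `F_{a,b,c} ∘ Φ₁ = F_{a,b,c}`. -/
theorem Fabc_invariant_Phi1 (a b c : ℤ) (ha : (a : ℝ) ^ 2 < (c : ℝ) ^ 2) (hb : (b : ℝ) ^ 2 < (c : ℝ) ^ 2)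
    (habc : (a : ℝ) ^ 2 + (b : ℝ) ^ 2 ≤ (c : ℝ) ^ 2) (hpa : Even a) (hpb : Odd b) (hpc : Even c) :
    ∀ x y : ℝ, Fabc (a : ℝ) (b : ℝ) (c : ℝ) (x + Real.pi, Real.pi - y) = Fabc (a : ℝ) (b : ℝ) (c : ℝ) (x, y) := by
  intro x y
  have h1 : phi1 (a:ℝ) b c (Real.pi - y) = phi1 (a:ℝ) b c y := by
    simp [phi1, Real.sin_pi_sub]
  have h2 : phi2 (a:ℝ) b c (Real.pi - y) = -phi2 (a:ℝ) b c y := by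
    simp [phi2, Real.cos_pi_sub]
  have h3 : phi3 (a:ℝ) b c (Real.pi - y) = phi3 (a:ℝ) b c y := by
    simp [phi3, Real.sin_pi_sub]
  simp only [Fabc]
  congr 1
  funext i
  fin_cases i <;>
  simp [h1, h2, h3, sin_even_shift a hpa, cos_even_shift a hpa,
    sin_odd_shift b hpb, cos_odd_shift b hpb, sin_even_shift c hpc, cos_even_shift c hpc]
end

section
/- Let a, b be nonzero real numbers and set c = √(a² + b²). Then for all (x, y) ∈ ℝ², F_{a,b,c}(x, y) = (sin(ax) sin y, cos(ax) sin y, sin(bx) cos y, cos(bx) cos y, 0, 0); that is, the last two components vanish identically and the first four components give (up to reordering of coordinates) the Lawson immersion Ψ_{b,a}(x, y) = (cos(bx) cos y, sin(bx) cos y, cos(ax) sin y, sin(ax) sin y) into S³ ⊂ ℝ⁴, so T_{a,b,√(a²+b²)} is the Lawson tau-surface τ_{b,a}. -/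
open Real

/-- Let `a, b` be nonzero reals and `c = √(a² + b²)`. Then
`F_{a,b,c}(x,y) = (sin(ax)sin y, cos(ax)sin y, sin(bx)cos y, cos(bx)cos y, 0, 0)`:
the last two components vanish and the first four give (up to reordering of
coordinates) the Lawson immersion `Ψ_{b,a}` into `S³ ⊂ ℝ⁴`, so `T_{a,b,√(a²+b²)}` is
the Lawson tau-surface `τ_{b,a}`. -/
theorem Fabc_lawson_case (a b : ℝ) (ha : a ≠ 0) (hb : b ≠ 0) :
    ∀ x y : ℝ,
      Fabc a b (Real.sqrt (a ^ 2 + b ^ 2)) (x, y) =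
        (WithLp.equiv 2 (Fin 6 → ℝ)).symm
          ![Real.sin (a * x) * Real.sin y,
            Real.cos (a * x) * Real.sin y,
            Real.sin (b * x) * Real.cos y,
            Real.cos (b * x) * Real.cos y, 0, 0] := by
  intro x y
  have hc2 : Real.sqrt (a ^ 2 + b ^ 2) ^ 2 = a ^ 2 + b ^ 2 := by
    exact Real.sq_sqrt (by positivity)
  have ha2 : a ^ 2 ≠ 0 := pow_ne_zero 2 ha
  have hb2 : b ^ 2 ≠ 0 := pow_ne_zero 2 hb
  have h1 : phi1 a b (Real.sqrt (a ^ 2 + b ^ 2)) y = Real.sin y := by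
    unfold phi1
    rw [hc2]
    have : (b ^ 2 + (a ^ 2 + b ^ 2) - a ^ 2) / (2 * (a ^ 2 + b ^ 2 - a ^ 2)) = 1 := by
      field_simp; ring
    rw [this, Real.sqrt_one, one_mul]
  have h2 : phi2 a b (Real.sqrt (a ^ 2 + b ^ 2)) y = Real.cos y := by
    unfold phi2
    rw [hc2]
    have : (a ^ 2 + (a ^ 2 + b ^ 2) - b ^ 2) / (2 * (a ^ 2 + b ^ 2 - b ^ 2)) = 1 := by
      field_simp; ring
    rw [this, Real.sqrt_one, one_mul]
  have h3 : phi3 a b (Real.sqrt (a ^ 2 + b ^ 2)) y = 0 := by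
    unfold phi3
    rw [hc2]
    have : a ^ 2 + b ^ 2 - (a ^ 2 + b ^ 2) = 0 := by ring
    rw [this, zero_div, Real.sqrt_zero, zero_mul]
  unfold Fabc
  simp only [h1, h2, h3, mul_zero]
end
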